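/- arXiv:1806.00457 — 2 statements merged into one kernel-verified Lean document; each statement's English description precedes it below -/
import Mathlib

section
/- The lexicographic order on monomials of R = K[x_{k,j} : k ∈ [c], j ∈ N] induced by ordering the variables x_{k,j} ≤ x_{k',j'} iff (k < k') or (k = k' and j < j') respects Inc(N)^i for every i ≥ 0; that is, u ≤ v implies π(u) ≤ π(v) for all monomials u, v and all π ∈ Inc(N)^i. -/
open MvPolynomial

/-- The ordering of the variables `x_{k,j}`: `x_{k,j} ≤ x_{k',j'}` iff `k < k'`, or `k = k'`
and `j ≤ j'`. -/
def vle (c : ℕ) (p q : Fin c × ℕ) : Prop :=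
  p.1 < q.1 ∨ (p.1 = q.1 ∧ p.2 ≤ q.2)

/-- The induced strict ordering of the variables. -/
def vlt (c : ℕ) (p q : Fin c × ℕ) : Prop := vle c p q ∧ p ≠ q

/-- The lexicographic order on monomials (exponent vectors) induced by the above ordering of
the variables: `u ≤ v` iff `u = v` or `u` has a smaller exponent than `v` at the largest
variable where they differ. -/
def LexLe (c : ℕ) (u v : (Fin c × ℕ) →₀ ℕ) : Prop :=
  u = v ∨ ∃ p : Fin c × ℕ, u p < v p ∧ ∀ q : Fin c × ℕ, vlt c p q → u q = v q

/-- (0-indexed: `Inc(ℕ)^i` is the monoid of strictly increasing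
`π : ℕ → ℕ` fixing all `j < i`, acting on exponent vectors by `Finsupp.mapDomain` of
`(k,j) ↦ (k, π j)`.)  The lexicographic order respects `Inc(ℕ)^i` for every `i`. -/
theorem stmt13 (c i : ℕ) (π : ℕ → ℕ) (hπ : StrictMono π) (hfix : ∀ j < i, π j = j)
    (u v : (Fin c × ℕ) →₀ ℕ) (h : LexLe c u v) :
    LexLe c (Finsupp.mapDomain (Prod.map (id : Fin c → Fin c) π) u)
      (Finsupp.mapDomain (Prod.map (id : Fin c → Fin c) π) v) := by
  have hinj : Function.Injective (Prod.map (id : Fin c → Fin c) π) :=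
    Function.Injective.prodMap (fun _ _ h => h) hπ.injective
  rcases h with h | ⟨p, hp, hq⟩
  · left; rw [h]
  · right
    refine ⟨Prod.map id π p, ?_, ?_⟩
    · rwa [Finsupp.mapDomain_apply hinj, Finsupp.mapDomain_apply hinj]
    · intro q hq'
      by_cases hr : q ∈ Set.range (Prod.map (id : Fin c → Fin c) π)
      · obtain ⟨r, rfl⟩ := hr
        rw [Finsupp.mapDomain_apply hinj, Finsupp.mapDomain_apply hinj]
        apply hq
        obtain ⟨hle, hne⟩ := hq'
        refine ⟨?_, fun h => hne (by rw [h])⟩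
        rcases hle with h1 | ⟨h1, h2⟩
        · exact Or.inl h1
        · exact Or.inr ⟨h1, le_of_not_gt fun hlt => absurd (hπ hlt) (not_lt.2 h2)⟩
      · rw [Finsupp.mapDomain_notin_range _ _ hr, Finsupp.mapDomain_notin_range _ _ hr]
end

section
/- Let (I_n)_{n≥1} be a nonzero Inc(N)^i-invariant chain of monomial ideals with stability index r. Then every i-critical monomial of I_r is a minimal generator of I_n for all n ≥ r, and consequently the weight ω̃^{(i)}(I_n) equals ω̃^{(i)}(I_r) for all n ≥ r. -/
open MvPolynomial

noncomputable section Weights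

/-!  We work in `R = K[x_{k,j} : k ∈ [c], j ∈ ℕ]` with 0-indexed columns: the paper's
variable `x_{k,j}` (`j ≥ 1`) is `X (k, j-1)` here.  Accordingly the paper's condition
`j > i` becomes `i ≤ j`, `min(u) > i` becomes "all column indices of `u` are `≥ i`",
and `Inc(ℕ)^i` fixes all `j < i`.  Monomials are identified with their exponent
vectors in `(Fin c × ℕ) →₀ ℕ`. -/

variable {K : Type} [Field K] {c : ℕ}

/-- A monomial ideal: an ideal generated by monomials. -/
def IsMonomialIdealG {σ : Type} (I : Ideal (MvPolynomial σ K)) : Prop :=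
  ∃ T : Set (σ →₀ ℕ), I = Ideal.span ((fun d => (monomial d (1 : K))) '' T)

/-- The degree of a monomial. -/
def degE (d : (Fin c × ℕ) →₀ ℕ) : ℕ := d.sum fun _ e => e

/-- `w_k^{(i)}(u)`: the largest `e` such that `x_{k,j}^e` divides `u` for some column
`j ≥ i`. -/
def wkE (i : ℕ) (k : Fin c) (d : (Fin c × ℕ) →₀ ℕ) : ℕ :=
  (d.support.filter (fun p => p.1 = k ∧ i ≤ p.2)).sup d

/-- `w^{(i)}(u) = max_k w_k^{(i)}(u)`. -/
def wE (i : ℕ) (d : (Fin c × ℕ) →₀ ℕ) : ℕ :=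
  Finset.univ.sup (fun k : Fin c => wkE i k d)

/-- `G(I)`: the set of (exponents of) minimal monomial generators of `I`. -/
def minGens (I : Ideal (MvPolynomial (Fin c × ℕ) K)) : Set ((Fin c × ℕ) →₀ ℕ) :=
  {d | monomial d (1 : K) ∈ I ∧ ∀ e : (Fin c × ℕ) →₀ ℕ, e ≤ d → e ≠ d →
    monomial e (1 : K) ∉ I}

/-- `G_+^{(i)}(I)`: the minimal generators `u` with `min(u) > i`. -/
def GplusE (i : ℕ) (I : Ideal (MvPolynomial (Fin c × ℕ) K)) : Set ((Fin c × ℕ) →₀ ℕ) :=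
  {d ∈ minGens I | d ≠ 0 ∧ ∀ p ∈ d.support, i ≤ p.2}

/-- `w_k^{(i)}(I) = max {w_k^{(i)}(u) : u ∈ G(I)}`. -/
def wkIdeal (i : ℕ) (k : Fin c) (I : Ideal (MvPolynomial (Fin c × ℕ) K)) : ℕ :=
  sSup (wkE i k '' minGens I)

/-- `ω^{(i)}(I)`: `min {w^{(i)}(u) : u ∈ G_+^{(i)}(I)}` if `G_+^{(i)}(I) ≠ ∅`, and
`max {w^{(i)}(u) : u ∈ G(I)}` otherwise. -/
def omegaIdeal (i : ℕ) (I : Ideal (MvPolynomial (Fin c × ℕ) K)) : ℕ := by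
  classical exact
    if (GplusE i I).Nonempty then sInf (wE i '' GplusE i I) else sSup (wE i '' minGens I)

/-- `ω̃^{(i)}(I) = min {w^{(i)}(u) : u ∈ G_+^{(i)}(I) ∪ G^{(i)}(I)}` (with value `0` when
this set is empty, matching `sInf ∅ = 0`). -/
def omegaTilde (i : ℕ) (I : Ideal (MvPolynomial (Fin c × ℕ) K)) : ℕ :=
  sInf (wE i '' {d ∈ minGens I | ∃ p ∈ d.support, i ≤ p.2})

/-- `u` is an `i`-critical monomial of `I`: a minimal generator with `w^{(i)}(u) = ω̃^{(i)}(I)`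
of least degree among the minimal generators with this property. -/
def IsCritical (i : ℕ) (I : Ideal (MvPolynomial (Fin c × ℕ) K))
    (d : (Fin c × ℕ) →₀ ℕ) : Prop :=
  d ∈ minGens I ∧ wE i d = omegaTilde i I ∧
    ∀ e ∈ minGens I, wE i e = omegaTilde i I → degE d ≤ degE e

end Weights

noncomputable section AuxW

variable {K : Type} [Field K] {c : ℕ}

/-- Renaming of exponent vectors along a column map. -/
def renE (c : ℕ) (π : ℕ → ℕ) (d : (Fin c × ℕ) →₀ ℕ) : (Fin c × ℕ) →₀ ℕ :=
  d.mapDomain (Prod.map id π)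

lemma prodmap_inj {π : ℕ → ℕ} (hπ : StrictMono π) :
    Function.Injective (Prod.map (id : Fin c → Fin c) π) :=
  Function.injective_id.prodMap hπ.injective

lemma degE_add (a b : (Fin c × ℕ) →₀ ℕ) : degE (a + b) = degE a + degE b :=
  Finsupp.sum_add_index' (fun _ => rfl) (fun _ _ _ => rfl)

lemma le_degE (a : (Fin c × ℕ) →₀ ℕ) (p : Fin c × ℕ) : a p ≤ degE a := by
  by_cases h : p ∈ a.support
  · exact Finset.single_le_sum (f := fun q => a q) (fun q _ => Nat.zero_le _) h
  · simp [Finsupp.notMem_support_iff.mp h]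

lemma degE_mono {a b : (Fin c × ℕ) →₀ ℕ} (h : a ≤ b) : degE a ≤ degE b := by
  have h2 : a + (b - a) = b := add_tsub_cancel_of_le h
  have := degE_add a (b - a)
  rw [h2] at this
  omega

lemma eq_of_le_of_degE_le {a b : (Fin c × ℕ) →₀ ℕ} (h : a ≤ b) (hd : degE b ≤ degE a) :
    a = b := by
  have h2 : a + (b - a) = b := add_tsub_cancel_of_le h
  have h3 := degE_add a (b - a)
  rw [h2] at h3
  have hz : degE (b - a) = 0 := by omega
  have h4 : b - a = 0 := by
    ext p
    have := le_degE (b - a) p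
    simp only [Finsupp.coe_zero, Pi.zero_apply]
    omega
  rw [h4, add_zero] at h2
  exact h2

lemma degE_lt_of_lt {a b : (Fin c × ℕ) →₀ ℕ} (h : a ≤ b) (hne : a ≠ b) :
    degE a < degE b := by
  rcases lt_or_ge (degE a) (degE b) with h1 | h1
  · exact h1
  · exact absurd (eq_of_le_of_degE_le h h1) hne

lemma wkE_mono (i : ℕ) (k : Fin c) {a b : (Fin c × ℕ) →₀ ℕ} (h : a ≤ b) :
    wkE i k a ≤ wkE i k b := by
  apply Finset.sup_le
  intro p hp
  rw [Finset.mem_filter] at hp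
  obtain ⟨hps, hcond⟩ := hp
  have hab : a p ≤ b p := h p
  have hpa : a p ≠ 0 := Finsupp.mem_support_iff.mp hps
  have hpb : p ∈ b.support := Finsupp.mem_support_iff.mpr (by omega)
  exact le_trans hab (Finset.le_sup (Finset.mem_filter.mpr ⟨hpb, hcond⟩))

lemma wE_mono (i : ℕ) {a b : (Fin c × ℕ) →₀ ℕ} (h : a ≤ b) : wE i a ≤ wE i b :=
  Finset.sup_mono_fun (fun k _ => wkE_mono i k h)

lemma renE_support {π : ℕ → ℕ} (hπ : StrictMono π) (d : (Fin c × ℕ) →₀ ℕ) :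
    (renE c π d).support = d.support.image (Prod.map id π) :=
  Finsupp.mapDomain_support_of_injective (prodmap_inj hπ) d

lemma degE_renE (π : ℕ → ℕ) (d : (Fin c × ℕ) →₀ ℕ) : degE (renE c π d) = degE d :=
  Finsupp.sum_mapDomain_index (fun _ => rfl) (fun _ _ _ => rfl)

lemma renE_mono (π : ℕ → ℕ) {a b : (Fin c × ℕ) →₀ ℕ} (h : a ≤ b) :
    renE c π a ≤ renE c π b := by
  have h2 : a + (b - a) = b := add_tsub_cancel_of_le h
  refine le_iff_exists_add.mpr ⟨renE c π (b - a), ?_⟩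
  rw [renE, renE, renE, ← Finsupp.mapDomain_add, h2]

lemma wkE_renE {i : ℕ} {π : ℕ → ℕ} (hπ : StrictMono π) (hfix : ∀ j < i, π j = j)
    (k : Fin c) (d : (Fin c × ℕ) →₀ ℕ) : wkE i k (renE c π d) = wkE i k d := by
  classical
  have hint : ∀ j, i ≤ π j ↔ i ≤ j := by
    intro j
    constructor
    · intro h
      by_contra hj
      push_neg at hj
      rw [hfix j hj] at h
      omega
    · intro h
      exact le_trans h hπ.le_apply
  unfold wkE
  rw [renE_support hπ, Finset.filter_image, Finset.sup_image]
  refine Finset.sup_congr ?_ ?_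
  · apply Finset.filter_congr
    intro q _
    simp only [Prod.map, id]
    rw [hint q.2]
  · intro q _
    exact Finsupp.mapDomain_apply (prodmap_inj hπ) d q

lemma wE_renE {i : ℕ} {π : ℕ → ℕ} (hπ : StrictMono π) (hfix : ∀ j < i, π j = j)
    (d : (Fin c × ℕ) →₀ ℕ) : wE i (renE c π d) = wE i d := by
  unfold wE
  exact Finset.sup_congr rfl (fun k _ => wkE_renE hπ hfix k d)

lemma renE_eq_self {i : ℕ} {π : ℕ → ℕ} (hfix : ∀ j < i, π j = j)
    {d : (Fin c × ℕ) →₀ ℕ} (h : ∀ p ∈ d.support, p.2 < i) : renE c π d = d := by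
  rw [renE, Finsupp.mapDomain_congr (g := id) ?_, Finsupp.mapDomain_id]
  intro p hp
  have : π p.2 = p.2 := hfix p.2 (h p hp)
  show (p.1, π p.2) = p
  rw [this]

lemma monomial_mem_of_le {I : Ideal (MvPolynomial (Fin c × ℕ) K)}
    {t v : (Fin c × ℕ) →₀ ℕ} (hI : monomial t (1 : K) ∈ I) (h : t ≤ v) :
    monomial v (1 : K) ∈ I := by
  have hv : monomial v (1 : K) = monomial (v - t) 1 * monomial t 1 := by
    rw [monomial_mul, one_mul, tsub_add_cancel_of_le h]
  rw [hv]
  exact Ideal.mul_mem_left _ _ hI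

lemma exists_minGen {J : Ideal (MvPolynomial (Fin c × ℕ) K)}
    (v : (Fin c × ℕ) →₀ ℕ) (hv : monomial v (1 : K) ∈ J) :
    ∃ u ∈ minGens J, u ≤ v := by
  by_cases h : v ∈ minGens J
  · exact ⟨v, h, le_rfl⟩
  · have h' : ∃ e, e ≤ v ∧ e ≠ v ∧ monomial e (1 : K) ∈ J := by
      by_contra hc
      push_neg at hc
      exact h ⟨hv, fun e he hne => hc e he hne⟩
    obtain ⟨e, he1, he2, he3⟩ := h'
    have hlt : degE e < degE v := degE_lt_of_lt he1 he2
    obtain ⟨u, hu, hue⟩ := exists_minGen e he3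
    exact ⟨u, hu, le_trans hue he1⟩
termination_by degE v

lemma wE_pos {i : ℕ} {d : (Fin c × ℕ) →₀ ℕ} {q : Fin c × ℕ}
    (hq : q ∈ d.support) (hqi : i ≤ q.2) : 0 < wE i d := by
  have h1 : d q ≤ wkE i q.1 d :=
    Finset.le_sup (Finset.mem_filter.mpr ⟨hq, rfl, hqi⟩)
  have h2 : wkE i q.1 d ≤ wE i d :=
    Finset.le_sup (f := fun k : Fin c => wkE i k d) (Finset.mem_univ q.1)
  have h3 : d q ≠ 0 := Finsupp.mem_support_iff.mp hq
  omega

lemma exists_col_of_wE_pos {i : ℕ} {d : (Fin c × ℕ) →₀ ℕ} (h : 0 < wE i d) :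
    ∃ p ∈ d.support, i ≤ p.2 := by
  by_contra hc
  push_neg at hc
  have hz : wE i d = 0 := by
    apply Nat.le_zero.mp
    apply Finset.sup_le
    intro k _
    apply Finset.sup_le
    intro p hp
    rw [Finset.mem_filter] at hp
    exact absurd hp.2.2 (not_le.mpr (hc p hp.1))
  omega

lemma omegaTilde_def (i : ℕ) (J : Ideal (MvPolynomial (Fin c × ℕ) K)) :
    omegaTilde i J = sInf (wE i '' {d ∈ minGens J | ∃ p ∈ d.support, i ≤ p.2}) := rfl

end AuxW


/-- For a nonzero `Inc(ℕ)^i`-invariant chain of monomial ideals `(I_n)`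
with stability index `r`: every `i`-critical monomial of `I_r` stays a minimal generator of
`I_n` for all `n ≥ r`, and consequently `ω̃^{(i)}(I_n) = ω̃^{(i)}(I_r)` for all `n ≥ r`. -/
theorem stmt17 {K : Type} [Field K] (c i r : ℕ)
    (I : ℕ → Ideal (MvPolynomial (Fin c × ℕ) K))
    (hmon : ∀ n, IsMonomialIdealG (I n)) (hne : I r ≠ ⊥)
    (hsupp : ∀ n, ∀ f ∈ I n, ∀ d ∈ f.support, ∀ p ∈ d.support, p.2 < n)
    (hinv : ∀ m n, m ≤ n → ∀ π : ℕ → ℕ, StrictMono π → (∀ j < i, π j = j) →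
      (∀ j < m, π j < n) → ∀ f ∈ I m, rename (Prod.map (id : Fin c → Fin c) π) f ∈ I n)
    (hstab : ∀ m n, r ≤ m → m ≤ n →
      I n = Ideal.span {g | ∃ π : ℕ → ℕ, StrictMono π ∧ (∀ j < i, π j = j) ∧
        (∀ j < m, π j < n) ∧ ∃ f ∈ I m, g = rename (Prod.map (id : Fin c → Fin c) π) f}) :
    (∀ n, r ≤ n → ∀ d, IsCritical i (I r) d → d ∈ minGens (I n)) ∧
      (∀ n, r ≤ n → omegaTilde i (I n) = omegaTilde i (I r)) := by
  classical
  -- monomials of members of `I r` belong to `I r`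
  have hmono_r : ∀ f ∈ I r, ∀ v ∈ f.support, monomial v (1 : K) ∈ I r := by
    obtain ⟨T, hT⟩ := hmon r
    intro f hf v hv
    rw [hT] at hf ⊢
    obtain ⟨t, ht, hle⟩ := (mem_ideal_span_monomial_image.mp hf) v hv
    exact monomial_mem_of_le (Ideal.subset_span ⟨t, ht, rfl⟩) hle
  -- key extraction lemma
  have key : ∀ n, r ≤ n → ∀ e : (Fin c × ℕ) →₀ ℕ, monomial e (1 : K) ∈ I n →
      ∃ π : ℕ → ℕ, StrictMono π ∧ (∀ j < i, π j = j) ∧ (∀ j < r, π j < n) ∧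
        ∃ u ∈ minGens (I r), renE c π u ≤ e := by
    intro n hn e he
    set M : Set ((Fin c × ℕ) →₀ ℕ) :=
      {m | ∃ π : ℕ → ℕ, StrictMono π ∧ (∀ j < i, π j = j) ∧ (∀ j < r, π j < n) ∧
        ∃ v, monomial v (1 : K) ∈ I r ∧ m = renE c π v} with hM
    have hIn : I n ≤ Ideal.span ((fun d => monomial d (1 : K)) '' M) := by
      rw [hstab r n le_rfl hn]
      apply Ideal.span_le.mpr
      rintro g ⟨π, hπ1, hπ2, hπ3, f, hf, rfl⟩
      have hfs : rename (Prod.map (id : Fin c → Fin c) π) f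
          = ∑ v ∈ f.support, monomial (renE c π v) (coeff v f) := by
        conv_lhs => rw [f.as_sum]
        rw [map_sum]
        refine Finset.sum_congr rfl (fun v _ => ?_)
        rw [rename_monomial]
        rfl
      rw [hfs]
      apply Ideal.sum_mem
      intro v hv
      have : monomial (renE c π v) (coeff v f)
          = C (coeff v f) * monomial (renE c π v) 1 := by
        rw [C_mul_monomial, mul_one]
      rw [this]
      apply Ideal.mul_mem_left
      exact Ideal.subset_span ⟨renE c π v, ⟨π, hπ1, hπ2, hπ3, v, hmono_r f hf v hv, rfl⟩, rfl⟩
    have hmem := hIn he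
    rw [mem_ideal_span_monomial_image] at hmem
    obtain ⟨m, hm, hme⟩ := hmem e (by simp [support_monomial])
    obtain ⟨π, h1, h2, h3, v, hvI, rfl⟩ := hm
    obtain ⟨u, huG, huv⟩ := exists_minGen v hvI
    exact ⟨π, h1, h2, h3, u, huG, le_trans (renE_mono π huv) hme⟩
  -- every minimal generator of `I n` is a renaming of a minimal generator of `I r`
  have gen_eq : ∀ n, r ≤ n → ∀ u ∈ minGens (I n),
      ∃ π : ℕ → ℕ, StrictMono π ∧ (∀ j < i, π j = j) ∧
        ∃ g ∈ minGens (I r), renE c π g = u := by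
    intro n hn u hu
    obtain ⟨π, h1, h2, h3, g, hg, hle⟩ := key n hn u hu.1
    have hmem : monomial (renE c π g) (1 : K) ∈ I n := by
      have := hinv r n hn π h1 h2 h3 (monomial g 1) hg.1
      rwa [rename_monomial] at this
    have heq : renE c π g = u := by
      by_contra hne'
      exact hu.2 _ hle hne' hmem
    exact ⟨π, h1, h2, g, hg, heq⟩
  -- Part 1
  have part1 : ∀ n, r ≤ n → ∀ d, IsCritical i (I r) d → d ∈ minGens (I n) := by
    rintro n hn d ⟨hdG, hdw, hdm⟩
    constructor
    · have := hinv r n hn id strictMono_id (fun j _ => rfl)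
        (fun j hj => lt_of_lt_of_le hj hn) (monomial d 1) hdG.1
      rwa [Prod.map_id, rename_id] at this
    · intro e hed hne' hmem
      obtain ⟨π, h1, h2, h3, u, huG, hle⟩ := key n hn e hmem
      by_cases hcol : ∃ p ∈ u.support, i ≤ p.2
      · have h5 : omegaTilde i (I r) ≤ wE i u :=
          Nat.sInf_le ⟨u, ⟨huG, hcol⟩, rfl⟩
        have h6 : wE i (renE c π u) = wE i u := wE_renE h1 h2 u
        have h7 : wE i (renE c π u) ≤ wE i e := wE_mono i hle
        have h8 : wE i e ≤ wE i d := wE_mono i hed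
        have h9 : wE i u = omegaTilde i (I r) := by omega
        have h10 : degE d ≤ degE u := hdm u huG h9
        have h11 : degE (renE c π u) = degE u := degE_renE π u
        have h12 : degE (renE c π u) ≤ degE e := degE_mono hle
        have h13 : degE e ≤ degE d := degE_mono hed
        exact hne' (eq_of_le_of_degE_le hed (by omega))
      · push_neg at hcol
        have hself : renE c π u = u := renE_eq_self h2 (fun p hp => hcol p hp)
        rw [hself] at hle
        have hud : u ≤ d := le_trans hle hed
        have hud' : u = d := by
          by_contra h
          exact hdG.2 u hud h huG.1
        rw [hud'] at hle
        exact hne' (le_antisymm hed hle)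
  -- transfer of elements of the weight sets
  have transfer : ∀ n, r ≤ n →
      ∀ u ∈ {d ∈ minGens (I n) | ∃ p ∈ d.support, i ≤ p.2},
      ∃ g ∈ {d ∈ minGens (I r) | ∃ p ∈ d.support, i ≤ p.2}, wE i g = wE i u := by
    rintro n hn u ⟨huG, p, hp, hpi⟩
    obtain ⟨π, h1, h2, g, hg, hren⟩ := gen_eq n hn u huG
    refine ⟨g, ⟨hg, ?_⟩, by rw [← hren, wE_renE h1 h2]⟩
    rw [← hren, renE_support h1] at hp
    obtain ⟨q, hq, hqe⟩ := Finset.mem_image.mp hp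
    refine ⟨q, hq, ?_⟩
    by_contra hqi
    push_neg at hqi
    have : p.2 = π q.2 := by rw [← hqe]; rfl
    rw [this, h2 q.2 hqi] at hpi
    omega
  refine ⟨part1, ?_⟩
  intro n hn
  by_cases hS : {d ∈ minGens (I r) | ∃ p ∈ d.support, i ≤ p.2}.Nonempty
  · obtain ⟨u0, hu0⟩ := hS
    have hne1 : (wE i '' {d ∈ minGens (I r) | ∃ p ∈ d.support, i ≤ p.2}).Nonempty :=
      ⟨_, Set.mem_image_of_mem _ hu0⟩
    obtain ⟨u1, hu1, hu1w⟩ := Nat.sInf_mem hne1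
    have hu1w' : wE i u1 = omegaTilde i (I r) := by rw [omegaTilde_def]; exact hu1w
    -- construct a critical monomial
    set D : Set ℕ := {m | ∃ e ∈ minGens (I r), wE i e = omegaTilde i (I r) ∧ degE e = m}
      with hD
    have hDne : D.Nonempty := ⟨degE u1, u1, hu1.1, hu1w', rfl⟩
    obtain ⟨d, hdG, hdw, hdd⟩ := Nat.sInf_mem hDne
    have hcrit : IsCritical i (I r) d :=
      ⟨hdG, hdw, fun e heG hew => by
        rw [hdd]; exact Nat.sInf_le ⟨e, heG, hew, rfl⟩⟩
    have hdn : d ∈ minGens (I n) := part1 n hn d hcrit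
    obtain ⟨q1, hq1, hq1i⟩ := hu1.2
    have hwpos : 0 < wE i d := by
      rw [hdw, ← hu1w']
      exact wE_pos hq1 hq1i
    obtain ⟨pd, hpd, hpdi⟩ := exists_col_of_wE_pos hwpos
    have hdSn : d ∈ {e ∈ minGens (I n) | ∃ p ∈ e.support, i ≤ p.2} :=
      ⟨hdn, pd, hpd, hpdi⟩
    have hle1 : omegaTilde i (I n) ≤ omegaTilde i (I r) := by
      rw [← hdw, omegaTilde_def]
      exact Nat.sInf_le ⟨d, hdSn, rfl⟩
    have hSnne : (wE i '' {e ∈ minGens (I n) | ∃ p ∈ e.support, i ≤ p.2}).Nonempty :=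
      ⟨_, Set.mem_image_of_mem _ hdSn⟩
    obtain ⟨u2, hu2, hu2w⟩ := Nat.sInf_mem hSnne
    obtain ⟨g, hgS, hgw⟩ := transfer n hn u2 hu2
    have hle2 : omegaTilde i (I r) ≤ omegaTilde i (I n) := by
      rw [omegaTilde_def i (I n), ← hu2w, ← hgw, omegaTilde_def]
      exact Nat.sInf_le ⟨g, hgS, rfl⟩
    omega
  · have hSr : {d ∈ minGens (I r) | ∃ p ∈ d.support, i ≤ p.2} = ∅ :=
      Set.not_nonempty_iff_eq_empty.mp hS
    have hSn : {d ∈ minGens (I n) | ∃ p ∈ d.support, i ≤ p.2} = ∅ := by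
      rw [Set.eq_empty_iff_forall_notMem]
      intro u hu
      obtain ⟨g, hgS, _⟩ := transfer n hn u hu
      rw [hSr] at hgS
      exact hgS
    rw [omegaTilde_def, omegaTilde_def, hSr, hSn]
end
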